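/- arXiv:2604.23930 — 6 statements merged into one kernel-verified Lean document; each statement's English description precedes it below -/
import Mathlib

section
/- If ξ* = (w_1,…,w_N) minimizes the convex, linearly differentiable criterion Φ over the set Ξ of bounded approximate designs, and i, j are two indices with ν_i < w_i < μ_i and ν_j < w_j < μ_j, then F_Φ(ξ*; i) = F_Φ(ξ*; j). -/
/-!
Shifting a small amount of mass `t > 0` from point `i` to point `j` keeps ξ* inside Ξ, because
both weights are strictly inside their bounds. Since Ξ is convex, optimality of ξ* makes the
directional derivative towards the shifted design nonnegative. By linear differentiability this
derivative is `F_Φ(ξ*, ξ*) + t (F_Φ(ξ*; j) - F_Φ(ξ*; i))`, and `F_Φ(ξ*, ξ*) = 0`, so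
`F_Φ(ξ*; i) ≤ F_Φ(ξ*; j)`; exchanging `i` and `j` gives equality.
-/

open Filter Set Topology

section DirectionalDerivative

variable {E : Type*} [AddCommGroup E] [Module ℝ E]

lemma eq_zero_of_tendsto_directionalQuotient_self {Φ : E → ℝ} {ξ : E} {L : ℝ}
    (h : Tendsto (fun α : ℝ => (Φ ((1 - α) • ξ + α • ξ) - Φ ξ) / α) (𝓝[>] 0) (𝓝 L)) :
    L = 0 := by
  have hconst : (fun α : ℝ => (Φ ((1 - α) • ξ + α • ξ) - Φ ξ) / α) = fun _ => 0 := by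
    funext α
    rw [← add_smul, sub_add_cancel, one_smul, sub_self, zero_div]
  rw [hconst] at h
  exact tendsto_nhds_unique h tendsto_const_nhds

lemma IsMinOn.nonneg_of_tendsto_directionalQuotient {Φ : E → ℝ} {S : Set E} {ξ η : E} {L : ℝ}
    (hS : Convex ℝ S) (hmin : IsMinOn Φ S ξ) (hξ : ξ ∈ S) (hη : η ∈ S)
    (h : Tendsto (fun α : ℝ => (Φ ((1 - α) • ξ + α • η) - Φ ξ) / α) (𝓝[>] 0) (𝓝 L)) :
    0 ≤ L := by
  refine ge_of_tendsto h ?_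
  filter_upwards [Ioo_mem_nhdsGT one_pos] with α hα
  have hseg : (1 - α) • ξ + α • η ∈ S :=
    hS hξ hη (sub_nonneg.2 hα.2.le) hα.1.le (sub_add_cancel 1 α)
  exact div_nonneg (sub_nonneg.2 (hmin hseg)) hα.1.le

end DirectionalDerivative

section MassTransfer

variable {ι : Type*} [DecidableEq ι]

lemma sum_add_smul_single_sub_single_mul [Fintype ι] (ξ g : ι → ℝ) (i j : ι) (t : ℝ) :
    ∑ k, (ξ + t • (Pi.single j 1 - Pi.single i 1) : ι → ℝ) k * g k =
      ∑ k, ξ k * g k + t * (g j - g i) := by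
  simp [add_mul, sub_mul, mul_assoc, Finset.sum_add_distrib, ← Finset.mul_sum, Pi.single_apply]

lemma add_smul_single_sub_single_mem_Icc {ν μ ξ : ι → ℝ} {i j : ι} (hij : i ≠ j)
    (hξ : ξ ∈ Icc ν μ) {t : ℝ} (ht : 0 ≤ t) (hti : t ≤ ξ i - ν i) (htj : t ≤ μ j - ξ j) :
    ξ + t • (Pi.single j 1 - Pi.single i 1) ∈ Icc ν μ := by
  have hcoord : ∀ k, (ξ + t • (Pi.single j 1 - Pi.single i 1) : ι → ℝ) k =
      ξ k + t * ((Pi.single j 1 : ι → ℝ) k - (Pi.single i 1 : ι → ℝ) k) := fun _ => rfl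
  refine ⟨fun k => ?_, fun k => ?_⟩ <;>
  · have := hξ.1 k
    have := hξ.2 k
    rw [hcoord]
    rcases eq_or_ne k i with rfl | hki
    · rw [Pi.single_eq_of_ne hij, Pi.single_eq_same]; linarith
    rcases eq_or_ne k j with rfl | hkj
    · rw [Pi.single_eq_same, Pi.single_eq_of_ne hki]; linarith
    · rw [Pi.single_eq_of_ne hkj, Pi.single_eq_of_ne hki]; linarith

end MassTransfer

theorem le_of_isMinOn_stdSimplex_inter_Icc {ι : Type*} [Fintype ι] [DecidableEq ι]
    {Φ : (ι → ℝ) → ℝ} {F : (ι → ℝ) → (ι → ℝ) → ℝ}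
    (hF : ∀ ξ ∈ stdSimplex ℝ ι, ∀ η ∈ stdSimplex ℝ ι,
      Tendsto (fun α : ℝ => (Φ ((1 - α) • ξ + α • η) - Φ ξ) / α) (𝓝[>] 0) (𝓝 (F ξ η)))
    (hlin : ∀ ξ ∈ stdSimplex ℝ ι, ∀ η ∈ stdSimplex ℝ ι, F ξ η = ∑ k, η k * F ξ (Pi.single k 1))
    {ν μ ξ : ι → ℝ} (hν : 0 ≤ ν) (hmin : IsMinOn Φ (stdSimplex ℝ ι ∩ Icc ν μ) ξ)
    (hξ : ξ ∈ stdSimplex ℝ ι ∩ Icc ν μ) {i j : ι} (hi : ν i < ξ i) (hj : ξ j < μ j) :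
    F ξ (Pi.single i 1) ≤ F ξ (Pi.single j 1) := by
  rcases eq_or_ne i j with rfl | hij
  · rfl
  set t := min (ξ i - ν i) (μ j - ξ j)
  have ht : 0 < t := lt_min (sub_pos.2 hi) (sub_pos.2 hj)
  set η := ξ + t • (Pi.single j 1 - Pi.single i 1)
  have hηIcc : η ∈ Icc ν μ :=
    add_smul_single_sub_single_mem_Icc hij hξ.2 ht.le (min_le_left _ _) (min_le_right _ _)
  have hηsum : ∑ k, η k = 1 := by
    have h := sum_add_smul_single_sub_single_mul ξ (1 : ι → ℝ) i j t
    simp only [Pi.one_apply, mul_one, sub_self, mul_zero, add_zero] at h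
    exact h.trans hξ.1.2
  have hη : η ∈ stdSimplex ℝ ι ∩ Icc ν μ :=
    ⟨⟨fun k => (hν k).trans (hηIcc.1 k), hηsum⟩, hηIcc⟩
  have hconvex : Convex ℝ (stdSimplex ℝ ι ∩ Icc ν μ) :=
    (convex_stdSimplex ℝ ι).inter (convex_Icc ν μ)
  have hFη : 0 ≤ F ξ η :=
    hmin.nonneg_of_tendsto_directionalQuotient hconvex hξ hη (hF ξ hξ.1 η hη.1)
  have hFξ : F ξ ξ = 0 := eq_zero_of_tendsto_directionalQuotient_self (hF ξ hξ.1 ξ hξ.1)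
  have hexpand : F ξ η = t * (F ξ (Pi.single j 1) - F ξ (Pi.single i 1)) :=
    calc F ξ η = ∑ k, η k * F ξ (Pi.single k 1) := hlin ξ hξ.1 η hη.1
      _ = ∑ k, ξ k * F ξ (Pi.single k 1) + t * (F ξ (Pi.single j 1) - F ξ (Pi.single i 1)) :=
        sum_add_smul_single_sub_single_mul ξ (fun k => F ξ (Pi.single k 1)) i j t
      _ = t * (F ξ (Pi.single j 1) - F ξ (Pi.single i 1)) := by
        rw [← hlin ξ hξ.1 ξ hξ.1, hFξ, zero_add]
  exact sub_nonneg.1 ((mul_nonneg_iff_of_pos_left ht).1 (hexpand ▸ hFη))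

theorem stmt_0_general
    (N : ℕ)
    (Δ : Set (Fin N → ℝ))
    (hΔ : Δ = {w : Fin N → ℝ | (∀ i, 0 ≤ w i) ∧ ∑ i, w i = 1})
    (Φ : (Fin N → ℝ) → ℝ)
    (F : (Fin N → ℝ) → (Fin N → ℝ) → ℝ)
    (hF : ∀ ξ ∈ Δ, ∀ η ∈ Δ,
      Filter.Tendsto (fun α : ℝ => (Φ ((1 - α) • ξ + α • η) - Φ ξ) / α)
        (nhdsWithin 0 (Set.Ioi 0)) (nhds (F ξ η)))
    (hlin : ∀ ξ ∈ Δ, ∀ η ∈ Δ, F ξ η = ∑ i, η i * F ξ (Pi.single i 1))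
    (ν μ : Fin N → ℝ)
    (hν0 : ∀ i, 0 ≤ ν i)
    (Ξ : Set (Fin N → ℝ))
    (hΞ : Ξ = {w : Fin N → ℝ | w ∈ Δ ∧ ∀ i, ν i ≤ w i ∧ w i ≤ μ i})
    (ξs : Fin N → ℝ) (hmem : ξs ∈ Ξ)
    (hopt : ∀ ξ ∈ Ξ, Φ ξs ≤ Φ ξ)
    (i j : Fin N)
    (hi : ν i < ξs i ∧ ξs i < μ i)
    (hj : ν j < ξs j ∧ ξs j < μ j) :
    F ξs (Pi.single i 1) = F ξs (Pi.single j 1) := by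
  have hΔ' : Δ = stdSimplex ℝ (Fin N) := hΔ
  have hΞ' : Ξ = stdSimplex ℝ (Fin N) ∩ Icc ν μ := by
    rw [hΞ, hΔ']
    ext w
    simp only [mem_inter_iff, mem_Icc, Pi.le_def, forall_and]
    rfl
  subst hΔ' hΞ'
  have hmin : IsMinOn Φ (stdSimplex ℝ (Fin N) ∩ Icc ν μ) ξs := isMinOn_iff.2 hopt
  exact le_antisymm
    (le_of_isMinOn_stdSimplex_inter_Icc hF hlin hν0 hmin hmem hi.1 hj.2)
    (le_of_isMinOn_stdSimplex_inter_Icc hF hlin hν0 hmin hmem hj.1 hi.2)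

/-- If ξ* minimizes the convex, linearly differentiable criterion Φ over the
set Ξ of bounded approximate designs, and i, j are two indices with ν_i < w_i < μ_i and
ν_j < w_j < μ_j, then F_Φ(ξ*; i) = F_Φ(ξ*; j). -/
theorem stmt_0
    (N : ℕ) (hN : 1 ≤ N)
    (Δ : Set (Fin N → ℝ))
    (hΔ : Δ = {w : Fin N → ℝ | (∀ i, 0 ≤ w i) ∧ ∑ i, w i = 1})
    (Φ : (Fin N → ℝ) → ℝ)
    (hconv : ConvexOn ℝ Δ Φ)
    (F : (Fin N → ℝ) → (Fin N → ℝ) → ℝ)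
    (hF : ∀ ξ ∈ Δ, ∀ η ∈ Δ,
      Filter.Tendsto (fun α : ℝ => (Φ ((1 - α) • ξ + α • η) - Φ ξ) / α)
        (nhdsWithin 0 (Set.Ioi 0)) (nhds (F ξ η)))
    (hlin : ∀ ξ ∈ Δ, ∀ η ∈ Δ, F ξ η = ∑ i, η i * F ξ (Pi.single i 1))
    (ν μ : Fin N → ℝ)
    (hν0 : ∀ i, 0 ≤ ν i) (hνμ : ∀ i, ν i < μ i) (hμ1 : ∀ i, μ i ≤ 1)
    (hνsum : ∑ i, ν i ≤ 1) (hμsum : 1 ≤ ∑ i, μ i)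
    (Ξ : Set (Fin N → ℝ))
    (hΞ : Ξ = {w : Fin N → ℝ | w ∈ Δ ∧ ∀ i, ν i ≤ w i ∧ w i ≤ μ i})
    (ξs : Fin N → ℝ) (hmem : ξs ∈ Ξ)
    (hopt : ∀ ξ ∈ Ξ, Φ ξs ≤ Φ ξ)
    (i j : Fin N)
    (hi : ν i < ξs i ∧ ξs i < μ i)
    (hj : ν j < ξs j ∧ ξs j < μ j) :
    F ξs (Pi.single i 1) = F ξs (Pi.single j 1) :=
  stmt_0_general N Δ hΔ Φ F hF hlin ν μ hν0 Ξ hΞ ξs hmem hopt i j hi hj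
end

section
/- Let ξ* = (w_1,…,w_N) ∈ Ξ and suppose there is a partition of the index set {1,…,N} into three sets X_1, X_2, X_3 and a real number s such that: (a) w_i = ν_i for i ∈ X_1 and w_i = μ_i for i ∈ X_3; (b) for every i ∈ X_2, ν_i < w_i < μ_i and F_Φ(ξ*; i) = s; and (c) F_Φ(ξ*; u) ≤ s for every u ∈ X_3 and s ≤ F_Φ(ξ*; ℓ) for every ℓ ∈ X_1. Then ξ* is Φ-optimal in Ξ, that is, Φ(ξ*) ≤ Φ(ξ) for every ξ ∈ Ξ. -/
/-!
By convexity, the one-sided directional derivative `F(ξ*, ξ)` is at most `Φ(ξ) - Φ(ξ*)`, so it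
suffices to show `F(ξ*, ξ) ≥ 0`. Linear differentiability and `F(ξ*, ξ*) = 0` give
`F(ξ*, ξ) = ∑ (ξ_i - ξ*_i) F(ξ*; i)`. On `X₁` the mass can only increase and `F(ξ*; i) ≥ s`, on `X₃`
it can only decrease and `F(ξ*; i) ≤ s`, and on `X₂` the derivative equals `s`; hence the sum is
at least `s ∑ (ξ_i - ξ*_i) = 0`.
-/

open Filter Topology

theorem ConvexOn.le_sub_of_tendsto_slope {E : Type*} [AddCommGroup E] [Module ℝ E] {S : Set E}
    {f : E → ℝ} (hf : ConvexOn ℝ S f) {x y : E} (hx : x ∈ S) (hy : y ∈ S) {L : ℝ}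
    (hL : Tendsto (fun α : ℝ => (f ((1 - α) • x + α • y) - f x) / α) (𝓝[>] 0) (𝓝 L)) :
    L ≤ f y - f x := by
  refine le_of_tendsto hL ?_
  filter_upwards [Ioo_mem_nhdsGT one_pos] with α ⟨hα0, hα1⟩
  rw [div_le_iff₀ hα0]
  have hchord := hf.2 hx hy (sub_nonneg.2 hα1.le) hα0.le (sub_add_cancel 1 α)
  simp only [smul_eq_mul] at hchord
  linarith

theorem eq_zero_of_tendsto_slope_self {E : Type*} [AddCommGroup E] [Module ℝ E] (f : E → ℝ)
    (x : E) {L : ℝ}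
    (hL : Tendsto (fun α : ℝ => (f ((1 - α) • x + α • x) - f x) / α) (𝓝[>] 0) (𝓝 L)) :
    L = 0 := by
  have hzero : (fun α : ℝ => (f ((1 - α) • x + α • x) - f x) / α) = fun _ => 0 := by
    funext α
    rw [← add_smul, sub_add_cancel, one_smul, sub_self, zero_div]
  rw [hzero] at hL
  exact tendsto_nhds_unique hL tendsto_const_nhds

theorem Fintype.sum_mul_le_sum_mul_of_sum_eq {ι : Type*} [Fintype ι] {p q d : ι → ℝ} {s : ℝ}
    (hsum : ∑ i, p i = ∑ i, q i) (h : ∀ i, (q i - p i) * s ≤ (q i - p i) * d i) :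
    ∑ i, p i * d i ≤ ∑ i, q i * d i := by
  have hle := Finset.sum_le_sum fun i (_ : i ∈ Finset.univ) => h i
  rw [← Finset.sum_mul, Finset.sum_sub_distrib, hsum, sub_self, zero_mul] at hle
  simp only [sub_mul, Finset.sum_sub_distrib] at hle
  linarith

theorem stmt_3_general
    (N : ℕ)
    (Δ : Set (Fin N → ℝ))
    (hΔ : Δ = {w : Fin N → ℝ | (∀ i, 0 ≤ w i) ∧ ∑ i, w i = 1})
    (Φ : (Fin N → ℝ) → ℝ)
    (hconv : ConvexOn ℝ Δ Φ)
    (F : (Fin N → ℝ) → (Fin N → ℝ) → ℝ)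
    (hF : ∀ ξ ∈ Δ, ∀ η ∈ Δ,
      Filter.Tendsto (fun α : ℝ => (Φ ((1 - α) • ξ + α • η) - Φ ξ) / α)
        (nhdsWithin 0 (Set.Ioi 0)) (nhds (F ξ η)))
    (hlin : ∀ ξ ∈ Δ, ∀ η ∈ Δ, F ξ η = ∑ i, η i * F ξ (Pi.single i 1))
    (ν μ : Fin N → ℝ)
    (Ξ : Set (Fin N → ℝ))
    (hΞ : Ξ = {w : Fin N → ℝ | w ∈ Δ ∧ ∀ i, ν i ≤ w i ∧ w i ≤ μ i})
    (ξs : Fin N → ℝ) (hmem : ξs ∈ Ξ)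
    (X1 X2 X3 : Set (Fin N))
    (hcover : X1 ∪ X2 ∪ X3 = Set.univ)
    (s : ℝ)
    (ha1 : ∀ i ∈ X1, ξs i = ν i)
    (ha3 : ∀ i ∈ X3, ξs i = μ i)
    (hb : ∀ i ∈ X2, (ν i < ξs i ∧ ξs i < μ i) ∧ F ξs (Pi.single i 1) = s)
    (hc3 : ∀ u ∈ X3, F ξs (Pi.single u 1) ≤ s)
    (hc1 : ∀ l ∈ X1, s ≤ F ξs (Pi.single l 1)) :
    ∀ ξ ∈ Ξ, Φ ξs ≤ Φ ξ := by
  intro ξ hξ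
  subst hΔ hΞ
  obtain ⟨hξsΔ, -⟩ := hmem
  obtain ⟨hξΔ, hξbd⟩ := hξ
  have hgap := hconv.le_sub_of_tendsto_slope hξsΔ hξΔ (hF ξs hξsΔ ξ hξΔ)
  have hself := eq_zero_of_tendsto_slope_self Φ ξs (hF ξs hξsΔ ξs hξsΔ)
  have hexchange : ∀ i, (ξ i - ξs i) * s ≤ (ξ i - ξs i) * F ξs (Pi.single i 1) := by
    intro i
    rcases (hcover.symm ▸ Set.mem_univ i : i ∈ X1 ∪ X2 ∪ X3) with (h1 | h2) | h3
    · exact mul_le_mul_of_nonneg_left (hc1 i h1) (by linarith [ha1 i h1, (hξbd i).1])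
    · rw [(hb i h2).2]
    · exact mul_le_mul_of_nonpos_left (hc3 i h3) (by linarith [ha3 i h3, (hξbd i).2])
  have hsum := Fintype.sum_mul_le_sum_mul_of_sum_eq (hξsΔ.2.trans hξΔ.2.symm) hexchange
  rw [hlin ξs hξsΔ ξs hξsΔ] at hself
  rw [hlin ξs hξsΔ ξ hξΔ] at hgap
  linarith

theorem stmt_3
    (N : ℕ) (hN : 1 ≤ N)
    (Δ : Set (Fin N → ℝ))
    (hΔ : Δ = {w : Fin N → ℝ | (∀ i, 0 ≤ w i) ∧ ∑ i, w i = 1})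
    (Φ : (Fin N → ℝ) → ℝ)
    (hconv : ConvexOn ℝ Δ Φ)
    (F : (Fin N → ℝ) → (Fin N → ℝ) → ℝ)
    (hF : ∀ ξ ∈ Δ, ∀ η ∈ Δ,
      Filter.Tendsto (fun α : ℝ => (Φ ((1 - α) • ξ + α • η) - Φ ξ) / α)
        (nhdsWithin 0 (Set.Ioi 0)) (nhds (F ξ η)))
    (hlin : ∀ ξ ∈ Δ, ∀ η ∈ Δ, F ξ η = ∑ i, η i * F ξ (Pi.single i 1))
    (ν μ : Fin N → ℝ)
    (hν0 : ∀ i, 0 ≤ ν i) (hνμ : ∀ i, ν i < μ i) (hμ1 : ∀ i, μ i ≤ 1)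
    (hνsum : ∑ i, ν i ≤ 1) (hμsum : 1 ≤ ∑ i, μ i)
    (Ξ : Set (Fin N → ℝ))
    (hΞ : Ξ = {w : Fin N → ℝ | w ∈ Δ ∧ ∀ i, ν i ≤ w i ∧ w i ≤ μ i})
    (ξs : Fin N → ℝ) (hmem : ξs ∈ Ξ)
    (X1 X2 X3 : Set (Fin N))
    (hcover : X1 ∪ X2 ∪ X3 = Set.univ)
    (hd12 : Disjoint X1 X2) (hd13 : Disjoint X1 X3) (hd23 : Disjoint X2 X3)
    (s : ℝ)
    (ha1 : ∀ i ∈ X1, ξs i = ν i)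
    (ha3 : ∀ i ∈ X3, ξs i = μ i)
    (hb : ∀ i ∈ X2, (ν i < ξs i ∧ ξs i < μ i) ∧ F ξs (Pi.single i 1) = s)
    (hc3 : ∀ u ∈ X3, F ξs (Pi.single u 1) ≤ s)
    (hc1 : ∀ l ∈ X1, s ≤ F ξs (Pi.single l 1)) :
    ∀ ξ ∈ Ξ, Φ ξs ≤ Φ ξ :=
  stmt_3_general N Δ hΔ Φ hconv F hF hlin ν μ Ξ hΞ ξs hmem X1 X2 X3 hcover s ha1 ha3 hb hc3 hc1
end

section
/- Suppose ξ* = (w_1,…,w_N) minimizes the convex, linearly differentiable criterion Φ over Ξ, and let X_1 = {i : w_i = ν_i}, X_3 = {i : w_i = μ_i}, and X_2 = {i : ν_i < w_i < μ_i}. If X_2 is nonempty, then the common value s = F_Φ(ξ*; i) for i ∈ X_2 satisfies s = (−Σ_{j ∈ X_1} F_Φ(ξ*; j) ν_j − Σ_{j ∈ X_3} F_Φ(ξ*; j) μ_j) / (1 − Σ_{j ∈ X_1} ν_j − Σ_{j ∈ X_3} μ_j), the denominator being positive since it equals Σ_{j ∈ X_2} w_j. -/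
theorem stmt_4
    (N : ℕ) (hN : 1 ≤ N)
    (Δ : Set (Fin N → ℝ))
    (hΔ : Δ = {w : Fin N → ℝ | (∀ i, 0 ≤ w i) ∧ ∑ i, w i = 1})
    (Φ : (Fin N → ℝ) → ℝ)
    (hconv : ConvexOn ℝ Δ Φ)
    (F : (Fin N → ℝ) → (Fin N → ℝ) → ℝ)
    (hF : ∀ ξ ∈ Δ, ∀ η ∈ Δ,
      Filter.Tendsto (fun α : ℝ => (Φ ((1 - α) • ξ + α • η) - Φ ξ) / α)
        (nhdsWithin 0 (Set.Ioi 0)) (nhds (F ξ η)))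
    (hlin : ∀ ξ ∈ Δ, ∀ η ∈ Δ, F ξ η = ∑ i, η i * F ξ (Pi.single i 1))
    (ν μ : Fin N → ℝ)
    (hν0 : ∀ i, 0 ≤ ν i) (hνμ : ∀ i, ν i < μ i) (hμ1 : ∀ i, μ i ≤ 1)
    (hνsum : ∑ i, ν i ≤ 1) (hμsum : 1 ≤ ∑ i, μ i)
    (Ξ : Set (Fin N → ℝ))
    (hΞ : Ξ = {w : Fin N → ℝ | w ∈ Δ ∧ ∀ i, ν i ≤ w i ∧ w i ≤ μ i})
    (ξs : Fin N → ℝ) (hmem : ξs ∈ Ξ)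
    (hopt : ∀ ξ ∈ Ξ, Φ ξs ≤ Φ ξ)
    (X1 X2 X3 : Finset (Fin N))
    (hX1 : ∀ i, i ∈ X1 ↔ ξs i = ν i)
    (hX2 : ∀ i, i ∈ X2 ↔ ν i < ξs i ∧ ξs i < μ i)
    (hX3 : ∀ i, i ∈ X3 ↔ ξs i = μ i)
    (hne : X2.Nonempty) :
    (1 - ∑ j ∈ X1, ν j - ∑ j ∈ X3, μ j = ∑ j ∈ X2, ξs j) ∧
    (0 < 1 - ∑ j ∈ X1, ν j - ∑ j ∈ X3, μ j) ∧
    (∀ i ∈ X2, F ξs (Pi.single i 1) =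
      (-(∑ j ∈ X1, F ξs (Pi.single j 1) * ν j)
        - ∑ j ∈ X3, F ξs (Pi.single j 1) * μ j)
      / (1 - ∑ j ∈ X1, ν j - ∑ j ∈ X3, μ j)) := by
  subst hΔ hΞ
  obtain ⟨⟨hpos, hsum⟩, hbd⟩ := hmem
  set g : Fin N → ℝ := fun j => F ξs (Pi.single j 1) with hg
  have hΔξs : ξs ∈ {w : Fin N → ℝ | (∀ i, 0 ≤ w i) ∧ ∑ i, w i = 1} := ⟨hpos, hsum⟩
  -- disjointness & covering
  have hd12 : Disjoint X1 X2 := by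
    rw [Finset.disjoint_left]; intro a h1 h2
    rw [hX1] at h1; rw [hX2] at h2; linarith [h2.1]
  have hd13 : Disjoint X1 X3 := by
    rw [Finset.disjoint_left]; intro a h1 h3
    rw [hX1] at h1; rw [hX3] at h3; linarith [hνμ a]
  have hd23 : Disjoint X2 X3 := by
    rw [Finset.disjoint_left]; intro a h2 h3
    rw [hX2] at h2; rw [hX3] at h3; linarith [h2.2]
  have hunion : X1 ∪ X2 ∪ X3 = Finset.univ := by
    apply Finset.eq_univ_iff_forall.mpr
    intro k
    simp only [Finset.mem_union, hX1, hX2, hX3]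
    rcases eq_or_lt_of_le (hbd k).1 with h | h
    · tauto
    · rcases eq_or_lt_of_le (hbd k).2 with h' | h'
      · tauto
      · tauto
  have hsplit : ∀ f : Fin N → ℝ,
      ∑ k, f k = ∑ k ∈ X1, f k + ∑ k ∈ X2, f k + ∑ k ∈ X3, f k := by
    intro f
    rw [← hunion, Finset.sum_union (Finset.disjoint_union_left.mpr ⟨hd13, hd23⟩),
        Finset.sum_union hd12]
  -- Part 1
  have h1 : 1 - ∑ j ∈ X1, ν j - ∑ j ∈ X3, μ j = ∑ j ∈ X2, ξs j := by
    have e1 : ∑ k ∈ X1, ξs k = ∑ k ∈ X1, ν k :=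
      Finset.sum_congr rfl fun k hk => (hX1 k).1 hk
    have e3 : ∑ k ∈ X3, ξs k = ∑ k ∈ X3, μ k :=
      Finset.sum_congr rfl fun k hk => (hX3 k).1 hk
    have hs := hsplit ξs
    rw [hsum, e1, e3] at hs
    linarith
  -- Part 2
  have hD : 0 < ∑ j ∈ X2, ξs j := by
    apply Finset.sum_pos
    · intro k hk
      have := ((hX2 k).1 hk).1
      linarith [hν0 k]
    · exact hne
  -- F ξs ξs = 0
  have hself : F ξs ξs = 0 := by
    have h0 : Filter.Tendsto (fun α : ℝ => (Φ ((1 - α) • ξs + α • ξs) - Φ ξs) / α)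
        (nhdsWithin 0 (Set.Ioi 0)) (nhds 0) := by
      have heq : ∀ α : ℝ, (Φ ((1 - α) • ξs + α • ξs) - Φ ξs) / α = 0 := by
        intro α
        have h : (1 - α) • ξs + α • ξs = ξs := by module
        rw [h, sub_self, zero_div]
      simp only [heq]
      exact tendsto_const_nhds
    exact tendsto_nhds_unique (hF ξs hΔξs ξs hΔξs) h0
  -- nonnegativity of directional derivative toward feasible points
  have hFnn : ∀ η : Fin N → ℝ, (∀ k, 0 ≤ η k) → (∑ k, η k = 1) →
      (∀ k, ν k ≤ η k ∧ η k ≤ μ k) → 0 ≤ F ξs η := by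
    intro η hη0 hη1 hηb
    have hηΔ : η ∈ {w : Fin N → ℝ | (∀ i, 0 ≤ w i) ∧ ∑ i, w i = 1} := ⟨hη0, hη1⟩
    have hev : ∀ᶠ α in nhdsWithin (0:ℝ) (Set.Ioi 0),
        0 ≤ (Φ ((1 - α) • ξs + α • η) - Φ ξs) / α := by
      have h1' : ∀ᶠ α : ℝ in nhdsWithin 0 (Set.Ioi 0), α < 1 :=
        Filter.Eventually.filter_mono nhdsWithin_le_nhds (gt_mem_nhds one_pos)
      filter_upwards [self_mem_nhdsWithin, h1'] with α hα hα1
      have hα0 : (0:ℝ) < α := hα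
      have happ : ∀ k, ((1 - α) • ξs + α • η) k = (1 - α) * ξs k + α * η k := by
        intro k; simp [Pi.add_apply, Pi.smul_apply, smul_eq_mul]
      have hmemΞ : ((1 - α) • ξs + α • η) ∈
          {w : Fin N → ℝ | w ∈ {w : Fin N → ℝ | (∀ i, 0 ≤ w i) ∧ ∑ i, w i = 1} ∧
            ∀ i, ν i ≤ w i ∧ w i ≤ μ i} := by
        refine ⟨⟨?_, ?_⟩, ?_⟩
        · intro k; rw [happ k]
          nlinarith [hpos k, hη0 k]
        · calc ∑ k, ((1 - α) • ξs + α • η) k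
              = ∑ k, ((1 - α) * ξs k + α * η k) := Finset.sum_congr rfl fun k _ => happ k
            _ = (1 - α) * ∑ k, ξs k + α * ∑ k, η k := by
                rw [Finset.sum_add_distrib, Finset.mul_sum, Finset.mul_sum]
            _ = 1 := by rw [hsum, hη1]; ring
        · intro k; rw [happ k]
          constructor
          · nlinarith [(hbd k).1, (hηb k).1]
          · nlinarith [(hbd k).2, (hηb k).2]
      have := hopt _ hmemΞ
      exact div_nonneg (by linarith) (le_of_lt hα0)
    exact ge_of_tendsto (hF ξs hΔξs η hηΔ) hev
  -- linearization at ξs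
  have hlin' : ∀ η : Fin N → ℝ, (∀ k, 0 ≤ η k) → (∑ k, η k = 1) →
      F ξs η = ∑ k, η k * g k := by
    intro η h1' h2'
    exact hlin ξs hΔξs η ⟨h1', h2'⟩
  have hzero : ∑ k, ξs k * g k = 0 := by
    rw [← hlin' ξs hpos hsum, hself]
  -- the gradient is constant on X2
  have hkey : ∀ i ∈ X2, ∀ j ∈ X2, g j ≤ g i := by
    intro i hi j hj
    rcases eq_or_ne i j with rfl | hij
    · exact le_refl _
    obtain ⟨hνi, hμi⟩ := (hX2 i).1 hi
    obtain ⟨hνj, hμj⟩ := (hX2 j).1 hj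
    set ε := min (μ i - ξs i) (ξs j - ν j) with hε
    have hε0 : 0 < ε := lt_min (by linarith) (by linarith)
    have hε1 : ε ≤ μ i - ξs i := min_le_left _ _
    have hε2 : ε ≤ ξs j - ν j := min_le_right _ _
    set η : Fin N → ℝ :=
      fun k => ξs k + ((if k = i then ε else 0) + (if k = j then -ε else 0)) with hηdef
    have hηi : η i = ξs i + ε := by simp [hηdef, hij]
    have hηj : η j = ξs j - ε := by
      simp [hηdef, Ne.symm hij, sub_eq_add_neg]
    have hηk : ∀ k, k ≠ i → k ≠ j → η k = ξs k := by
      intro k hk1 hk2; simp [hηdef, hk1, hk2]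
    have hηnn : ∀ k, 0 ≤ η k := by
      intro k
      by_cases hk1 : k = i
      · subst hk1; rw [hηi]; linarith [hpos k]
      · by_cases hk2 : k = j
        · subst hk2; rw [hηj]; linarith [hν0 k]
        · rw [hηk k hk1 hk2]; exact hpos k
    have hηsum : ∑ k, η k = 1 := by
      simp only [hηdef, Finset.sum_add_distrib, Finset.sum_ite_eq', Finset.mem_univ,
        if_true, hsum]
      ring
    have hηb : ∀ k, ν k ≤ η k ∧ η k ≤ μ k := by
      intro k
      by_cases hk1 : k = i
      · subst hk1; rw [hηi]; constructor <;> linarith [(hbd k).1]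
      · by_cases hk2 : k = j
        · subst hk2; rw [hηj]; constructor <;> linarith [(hbd k).2]
        · rw [hηk k hk1 hk2]; exact hbd k
    have hsum2 : ∑ k, η k * g k = ε * g i - ε * g j := by
      have hterm : ∀ k, η k * g k =
          ξs k * g k + ((if k = i then ε * g k else 0) + (if k = j then -(ε * g k) else 0)) := by
        intro k
        by_cases hk1 : k = i
        · subst hk1
          rw [if_pos rfl, if_neg hij, hηi]; ring
        · by_cases hk2 : k = j
          · subst hk2
            rw [if_neg hk1, if_pos rfl, hηj]; ring
          · rw [if_neg hk1, if_neg hk2, hηk k hk1 hk2]; ring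
      calc ∑ k, η k * g k
          = ∑ k, (ξs k * g k +
              ((if k = i then ε * g k else 0) + (if k = j then -(ε * g k) else 0))) :=
            Finset.sum_congr rfl fun k _ => hterm k
        _ = ε * g i - ε * g j := by
            rw [Finset.sum_add_distrib, Finset.sum_add_distrib, hzero,
              Finset.sum_ite_eq' Finset.univ i (fun k => ε * g k),
              Finset.sum_ite_eq' Finset.univ j (fun k => -(ε * g k))]
            simp only [Finset.mem_univ, if_true]
            ring
    have h0 : 0 ≤ ε * g i - ε * g j := by
      have hge := hFnn η hηnn hηsum hηb
      rw [hlin' η hηnn hηsum, hsum2] at hge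
      exact hge
    nlinarith [hε0]
  -- conclusion
  refine ⟨h1, by rw [h1]; exact hD, ?_⟩
  intro i hi
  have hz := hzero
  rw [hsplit (fun k => ξs k * g k)] at hz
  have e1 : ∑ k ∈ X1, ξs k * g k = ∑ k ∈ X1, g k * ν k :=
    Finset.sum_congr rfl fun k hk => by rw [(hX1 k).1 hk]; ring
  have e3 : ∑ k ∈ X3, ξs k * g k = ∑ k ∈ X3, g k * μ k :=
    Finset.sum_congr rfl fun k hk => by rw [(hX3 k).1 hk]; ring
  have e2 : ∑ k ∈ X2, ξs k * g k = (∑ k ∈ X2, ξs k) * g i := by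
    rw [Finset.sum_mul]
    refine Finset.sum_congr rfl fun k hk => ?_
    rw [le_antisymm (hkey i hi k hk) (hkey k hk i hi)]
  rw [e1, e2, e3] at hz
  rw [h1, eq_div_iff (ne_of_gt hD)]
  linarith
end

section
/- Let (X_1, X_2, X_3) be a partition of {1,…,N} and suppose ξ = (w_1,…,w_N) minimizes the convex, linearly differentiable criterion Φ over the subset of Ξ consisting of designs with w_i = 0 for all i ∈ X_1 and w_i = 1/n for all i ∈ X_3, and suppose the minimizer satisfies 0 < w_i < 1/n for every i ∈ X_2. If X_2 is nonempty, then F_Φ(ξ; i) takes the same value for all i ∈ X_2. -/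
/-!
Transferring a small amount of weight `t` from one support point `i ∈ X₂` to another `j ∈ X₂`
keeps the design feasible, since both weights lie strictly between `0` and `1/n`. The feasible
set is convex, so optimality of `ξ` makes the directional derivative towards the new design
nonnegative, and linear differentiability evaluates it as `t (F(ξ; j) - F(ξ; i))`, using
`F(ξ, ξ) = 0`. Exchanging `i` and `j` gives equality.
-/

open Filter Topology Finset

section DirectionalDerivative

variable {E : Type*} [AddCommGroup E] [Module ℝ E] {Φ : E → ℝ} {ξ η : E} {L : ℝ}

theorem eq_zero_of_tendsto_slope_self_s5
    (h : Tendsto (fun α : ℝ => (Φ ((1 - α) • ξ + α • ξ) - Φ ξ) / α) (𝓝[>] 0) (𝓝 L)) :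
    L = 0 := by
  have hzero : (fun α : ℝ => (Φ ((1 - α) • ξ + α • ξ) - Φ ξ) / α) = fun _ => 0 := by
    funext α
    rw [← add_smul, sub_add_cancel, one_smul, sub_self, zero_div]
  rw [hzero] at h
  exact tendsto_nhds_unique h tendsto_const_nhds

theorem IsMinOn.nonneg_of_tendsto_slope {S : Set E} (hmin : IsMinOn Φ S ξ) (hS : Convex ℝ S)
    (hξ : ξ ∈ S) (hη : η ∈ S)
    (h : Tendsto (fun α : ℝ => (Φ ((1 - α) • ξ + α • η) - Φ ξ) / α) (𝓝[>] 0) (𝓝 L)) :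
    0 ≤ L := by
  refine ge_of_tendsto h ?_
  filter_upwards [Ioc_mem_nhdsGT one_pos] with α ⟨hα0, hα1⟩
  exact div_nonneg (sub_nonneg.2 (hmin (hS hξ hη (by linarith) hα0.le (by ring)))) hα0.le

end DirectionalDerivative

section ConstrainedDesigns

variable {ι : Type*} [Fintype ι]

/-- The bracketing mirrors membership in `Ξ`, so that optimality over the constrained
bounded designs is `IsMinOn` on this set definitionally. -/
def constrainedDesigns (c : ℝ) (X₁ X₃ : Set ι) : Set (ι → ℝ) :=
  {w | (((∀ k, 0 ≤ w k) ∧ ∑ k, w k = 1) ∧ ∀ k, w k ≤ c) ∧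
    (∀ k ∈ X₁, w k = 0) ∧ ∀ k ∈ X₃, w k = c}

theorem convex_constrainedDesigns (c : ℝ) (X₁ X₃ : Set ι) :
    Convex ℝ (constrainedDesigns c X₁ X₃) := by
  rintro v ⟨⟨⟨hv0, hv1⟩, hvc⟩, hvX₁, hvX₃⟩ w ⟨⟨⟨hw0, hw1⟩, hwc⟩, hwX₁, hwX₃⟩ a b ha hb hab
  simp only [constrainedDesigns, Set.mem_ofPred_eq, Pi.add_apply, Pi.smul_apply, smul_eq_mul]
  refine ⟨⟨⟨fun k => ?_, ?_⟩, fun k => ?_⟩, fun k hk => ?_, fun k hk => ?_⟩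
  · have := hv0 k; have := hw0 k; positivity
  · rw [sum_add_distrib, ← mul_sum, ← mul_sum, hv1, hw1, mul_one, mul_one, hab]
  · calc a * v k + b * w k ≤ a * c + b * c := by gcongr <;> simp only [hvc, hwc]
      _ = c := by rw [← add_mul, hab, one_mul]
  · rw [hvX₁ k hk, hwX₁ k hk]; ring
  · rw [hvX₃ k hk, hwX₃ k hk, ← add_mul, hab, one_mul]

end ConstrainedDesigns

section Transfer

variable {ι : Type*} [DecidableEq ι]

def transfer (w : ι → ℝ) (i j : ι) (s : ℝ) : ι → ℝ :=
  w + Pi.single j s - Pi.single i s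

variable {w : ι → ℝ} {i j : ι} {s : ℝ}

theorem transfer_apply_of_ne {k : ι} (hki : k ≠ i) (hkj : k ≠ j) : transfer w i j s k = w k := by
  simp [transfer, hki, hkj]

theorem transfer_apply_left (hij : i ≠ j) : transfer w i j s i = w i - s := by
  simp [transfer, hij]

theorem transfer_apply_right (hij : i ≠ j) : transfer w i j s j = w j + s := by
  simp [transfer, hij.symm]

variable [Fintype ι]

theorem sum_transfer_mul (f : ι → ℝ) :
    ∑ k, transfer w i j s k * f k = ∑ k, w k * f k + s * (f j - f i) := by
  simp only [transfer, Pi.sub_apply, Pi.add_apply, sub_mul, add_mul, sum_sub_distrib,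
    sum_add_distrib, Pi.single_apply, ite_mul, zero_mul, sum_ite_eq', mem_univ, if_true]
  ring

theorem sum_transfer : ∑ k, transfer w i j s k = ∑ k, w k := by
  simpa using sum_transfer_mul (w := w) (i := i) (j := j) (s := s) fun _ => 1

theorem transfer_mem_constrainedDesigns {c : ℝ} {X₁ X₃ : Set ι}
    (hw : w ∈ constrainedDesigns c X₁ X₃) (hij : i ≠ j) (hs : 0 ≤ s) (hsi : s ≤ w i)
    (hsj : w j + s ≤ c) (hi : i ∉ X₁ ∪ X₃) (hj : j ∉ X₁ ∪ X₃) :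
    transfer w i j s ∈ constrainedDesigns c X₁ X₃ := by
  obtain ⟨⟨⟨hw0, hw1⟩, hwc⟩, hwX₁, hwX₃⟩ := hw
  have hother : ∀ k ∈ X₁ ∪ X₃, transfer w i j s k = w k := fun k hk =>
    transfer_apply_of_ne (fun h => hi (h ▸ hk)) (fun h => hj (h ▸ hk))
  refine ⟨⟨⟨fun k => ?_, sum_transfer.trans hw1⟩, fun k => ?_⟩,
    fun k hk => (hother k (.inl hk)).trans (hwX₁ k hk),
    fun k hk => (hother k (.inr hk)).trans (hwX₃ k hk)⟩
  · by_cases hki : k = i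
    · subst hki; rw [transfer_apply_left hij]; linarith
    by_cases hkj : k = j
    · subst hkj; rw [transfer_apply_right hij]; linarith [hw0 k]
    · rw [transfer_apply_of_ne hki hkj]; exact hw0 k
  · by_cases hki : k = i
    · subst hki; rw [transfer_apply_left hij]; linarith [hwc k]
    by_cases hkj : k = j
    · subst hkj; rw [transfer_apply_right hij]; exact hsj
    · rw [transfer_apply_of_ne hki hkj]; exact hwc k

end Transfer

theorem stmt_5_general
    (N : ℕ)
    (Δ : Set (Fin N → ℝ))
    (hΔ : Δ = {w : Fin N → ℝ | (∀ i, 0 ≤ w i) ∧ ∑ i, w i = 1})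
    (Φ : (Fin N → ℝ) → ℝ)
    (F : (Fin N → ℝ) → (Fin N → ℝ) → ℝ)
    (hF : ∀ ξ ∈ Δ, ∀ η ∈ Δ,
      Filter.Tendsto (fun α : ℝ => (Φ ((1 - α) • ξ + α • η) - Φ ξ) / α)
        (nhdsWithin 0 (Set.Ioi 0)) (nhds (F ξ η)))
    (hlin : ∀ ξ ∈ Δ, ∀ η ∈ Δ, F ξ η = ∑ i, η i * F ξ (Pi.single i 1))
    (n : ℕ)
    (Ξ : Set (Fin N → ℝ))
    (hΞ : Ξ = {w : Fin N → ℝ | w ∈ Δ ∧ ∀ i, w i ≤ 1 / (n : ℝ)})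
    (X1 X2 X3 : Set (Fin N))
    (ξ : Fin N → ℝ)
    (hmem : ξ ∈ Ξ)
    (hz1 : ∀ i ∈ X1, ξ i = 0)
    (hz3 : ∀ i ∈ X3, ξ i = 1 / (n : ℝ))
    (hopt : ∀ η ∈ Ξ, (∀ i ∈ X1, η i = 0) → (∀ i ∈ X3, η i = 1 / (n : ℝ)) →
      Φ ξ ≤ Φ η)
    (hint : ∀ i ∈ X2, 0 < ξ i ∧ ξ i < 1 / (n : ℝ)) :
    ∀ i ∈ X2, ∀ j ∈ X2, F ξ (Pi.single i 1) = F ξ (Pi.single j 1) := by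
  subst hΔ hΞ
  set S := constrainedDesigns (1 / (n : ℝ)) X1 X3
  have hξS : ξ ∈ S := ⟨hmem, hz1, hz3⟩
  have hmin : IsMinOn Φ S ξ := fun η ⟨hη, hη1, hη3⟩ => hopt η hη hη1 hη3
  have hfree : ∀ i ∈ X2, i ∉ X1 ∪ X3 := by
    rintro i hi (hi1 | hi3)
    · exact (hint i hi).1.ne' (hz1 i hi1)
    · exact (hint i hi).2.ne (hz3 i hi3)
  have hself : ∑ k, ξ k * F ξ (Pi.single k 1) = 0 := by
    rw [← hlin ξ hmem.1 ξ hmem.1]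
    exact eq_zero_of_tendsto_slope_self_s5 (hF ξ hmem.1 ξ hmem.1)
  have hle : ∀ i ∈ X2, ∀ j ∈ X2, i ≠ j → F ξ (Pi.single i 1) ≤ F ξ (Pi.single j 1) := by
    intro i hi j hj hij
    set t := min (ξ i) (1 / (n : ℝ) - ξ j)
    have ht : 0 < t := lt_min (hint i hi).1 (by linarith [(hint j hj).2])
    have hη : transfer ξ i j t ∈ S :=
      transfer_mem_constrainedDesigns hξS hij ht.le (min_le_left _ _)
        (by linarith [min_le_right (ξ i) (1 / (n : ℝ) - ξ j)]) (hfree i hi) (hfree j hj)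
    have hderiv := hmin.nonneg_of_tendsto_slope (convex_constrainedDesigns _ _ _) hξS hη
      (hF ξ hmem.1 _ hη.1.1)
    rw [hlin ξ hmem.1 _ hη.1.1, sum_transfer_mul, hself, zero_add] at hderiv
    exact sub_nonneg.1 (nonneg_of_mul_nonneg_right (by linarith) ht)
  intro i hi j hj
  rcases eq_or_ne i j with rfl | hij
  · rfl
  · exact (hle i hi j hj hij).antisymm (hle j hj i hi hij.symm)

theorem stmt_5
    (N : ℕ) (hN : 1 ≤ N)
    (Δ : Set (Fin N → ℝ))
    (hΔ : Δ = {w : Fin N → ℝ | (∀ i, 0 ≤ w i) ∧ ∑ i, w i = 1})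
    (Φ : (Fin N → ℝ) → ℝ)
    (hconv : ConvexOn ℝ Δ Φ)
    (F : (Fin N → ℝ) → (Fin N → ℝ) → ℝ)
    (hF : ∀ ξ ∈ Δ, ∀ η ∈ Δ,
      Filter.Tendsto (fun α : ℝ => (Φ ((1 - α) • ξ + α • η) - Φ ξ) / α)
        (nhdsWithin 0 (Set.Ioi 0)) (nhds (F ξ η)))
    (hlin : ∀ ξ ∈ Δ, ∀ η ∈ Δ, F ξ η = ∑ i, η i * F ξ (Pi.single i 1))
    (n : ℕ) (hn1 : 1 ≤ n) (hnN : n ≤ N)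
    (Ξ : Set (Fin N → ℝ))
    (hΞ : Ξ = {w : Fin N → ℝ | w ∈ Δ ∧ ∀ i, w i ≤ 1 / (n : ℝ)})
    (X1 X2 X3 : Set (Fin N))
    (hcover : X1 ∪ X2 ∪ X3 = Set.univ)
    (hd12 : Disjoint X1 X2) (hd13 : Disjoint X1 X3) (hd23 : Disjoint X2 X3)
    (ξ : Fin N → ℝ)
    (hmem : ξ ∈ Ξ)
    (hz1 : ∀ i ∈ X1, ξ i = 0)
    (hz3 : ∀ i ∈ X3, ξ i = 1 / (n : ℝ))
    (hopt : ∀ η ∈ Ξ, (∀ i ∈ X1, η i = 0) → (∀ i ∈ X3, η i = 1 / (n : ℝ)) →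
      Φ ξ ≤ Φ η)
    (hint : ∀ i ∈ X2, 0 < ξ i ∧ ξ i < 1 / (n : ℝ))
    (hne : X2.Nonempty) :
    ∀ i ∈ X2, ∀ j ∈ X2, F ξ (Pi.single i 1) = F ξ (Pi.single j 1) :=
  stmt_5_general N Δ hΔ Φ F hF hlin n Ξ hΞ X1 X2 X3 ξ hmem hz1 hz3 hopt hint
end

section
/- Let ξ = (w_1,…,w_N) ∈ Ξ with X_1(ξ) = {i : w_i = 0}, X_3(ξ) = {i : w_i = 1/n}, X_2(ξ) = {i : 0 < w_i < 1/n}, suppose F_Φ(ξ; i) = s for every i ∈ X_2(ξ), and suppose there exist ξ_0 ∈ Ξ and δ > 0 with Φ(ξ) − Φ(ξ_0) > δ. If X_2(ξ) is nonempty and X_1(ξ) is empty, then X_3(ξ) is nonempty and max_{i ∈ X_3(ξ)} F_Φ(ξ; i) − s ≥ δ. -/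
/-!
Convexity bounds the directional derivative by the secant, so
`∑ᵢ ξ₀ᵢ F(ξ; i) = F(ξ, ξ₀) ≤ Φ ξ₀ - Φ ξ < -δ`, while `∑ᵢ ξᵢ F(ξ; i) = F(ξ, ξ) = 0`.
Hence `δ < ∑ᵢ (ξᵢ - ξ₀ᵢ) (F(ξ; i) - s)`, using that both designs have total mass one.
Since `X₁(ξ)` is empty, only the indices of `X₃(ξ)` contribute to this sum, and there
`0 ≤ ξᵢ - ξ₀ᵢ ≤ ξᵢ` because `ξ₀ᵢ ≤ 1/n = ξᵢ`; so the sum is at most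
`max (max_{X₃} F(ξ; i) - s) 0`.
-/

open Filter Topology

theorem ConvexOn.le_sub_of_tendsto_slope_segment {E : Type*} [AddCommGroup E] [Module ℝ E]
    {S : Set E} {Φ : E → ℝ} (hΦ : ConvexOn ℝ S Φ) {x y : E} (hx : x ∈ S) (hy : y ∈ S) {L : ℝ}
    (hL : Tendsto (fun α : ℝ => (Φ ((1 - α) • x + α • y) - Φ x) / α) (𝓝[>] 0) (𝓝 L)) :
    L ≤ Φ y - Φ x := by
  refine le_of_tendsto hL ?_
  filter_upwards [Ioc_mem_nhdsGT (zero_lt_one' ℝ)] with α ⟨hα0, hα1⟩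
  have hsecant := hΦ.2 hx hy (sub_nonneg.2 hα1) hα0.le (sub_add_cancel 1 α)
  rw [div_le_iff₀ hα0]
  simp only [smul_eq_mul] at hsecant
  linarith

theorem eq_zero_of_tendsto_slope_segment_self {E : Type*} [AddCommGroup E] [Module ℝ E]
    {Φ : E → ℝ} {x : E} {L : ℝ}
    (hL : Tendsto (fun α : ℝ => (Φ ((1 - α) • x + α • x) - Φ x) / α) (𝓝[>] 0) (𝓝 L)) :
    L = 0 := by
  simp only [← add_smul, sub_add_cancel, one_smul, sub_self, zero_div] at hL
  exact tendsto_nhds_unique hL tendsto_const_nhds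

theorem lt_sub_of_lt_sum_sub_mul {ι : Type*} [Fintype ι] {T : Set ι} {w w₀ g : ι → ℝ}
    {s M δ : ℝ} (hw : ∀ i, 0 ≤ w i) (hw₀ : ∀ i, 0 ≤ w₀ i) (hw_sum : ∑ i, w i = 1)
    (hw₀_sum : ∑ i, w₀ i = 1) (hT : ∀ i ∈ T, w₀ i ≤ w i) (hg : ∀ i ∉ T, g i = s)
    (hM : ∀ i ∈ T, g i ≤ M) (hδ : 0 < δ) (h : δ < ∑ i, (w i - w₀ i) * g i) :
    δ < M - s := by
  have hcentered : ∑ i, (w i - w₀ i) * g i = ∑ i, (w i - w₀ i) * (g i - s) := by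
    simp only [mul_sub, Finset.sum_sub_distrib, ← Finset.sum_mul, hw_sum, hw₀_sum, sub_self,
      zero_mul, sub_zero]
  have hterm : ∀ i, (w i - w₀ i) * (g i - s) ≤ w i * max (M - s) 0 := by
    intro i
    by_cases hi : i ∈ T
    · calc (w i - w₀ i) * (g i - s) ≤ (w i - w₀ i) * max (M - s) 0 :=
            mul_le_mul_of_nonneg_left ((sub_le_sub_right (hM i hi) s).trans (le_max_left _ _))
              (sub_nonneg.2 (hT i hi))
        _ ≤ w i * max (M - s) 0 :=
            mul_le_mul_of_nonneg_right (sub_le_self _ (hw₀ i)) (le_max_right _ _)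
    · rw [hg i hi, sub_self, mul_zero]
      exact mul_nonneg (hw i) (le_max_right _ _)
  have hbound : δ < max (M - s) 0 := by
    calc δ < ∑ i, (w i - w₀ i) * (g i - s) := hcentered ▸ h
      _ ≤ ∑ i, w i * max (M - s) 0 := Finset.sum_le_sum fun i _ => hterm i
      _ = max (M - s) 0 := by rw [← Finset.sum_mul, hw_sum, one_mul]
  rcases max_cases (M - s) 0 with ⟨hmax, -⟩ | ⟨hmax, -⟩ <;> rw [hmax] at hbound <;> linarith

theorem stmt_7_general
    (N : ℕ)
    (Δ : Set (Fin N → ℝ))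
    (hΔ : Δ = {w : Fin N → ℝ | (∀ i, 0 ≤ w i) ∧ ∑ i, w i = 1})
    (Φ : (Fin N → ℝ) → ℝ)
    (hconv : ConvexOn ℝ Δ Φ)
    (F : (Fin N → ℝ) → (Fin N → ℝ) → ℝ)
    (hF : ∀ ξ ∈ Δ, ∀ η ∈ Δ,
      Filter.Tendsto (fun α : ℝ => (Φ ((1 - α) • ξ + α • η) - Φ ξ) / α)
        (nhdsWithin 0 (Set.Ioi 0)) (nhds (F ξ η)))
    (hlin : ∀ ξ ∈ Δ, ∀ η ∈ Δ, F ξ η = ∑ i, η i * F ξ (Pi.single i 1))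
    (n : ℕ)
    (Ξ : Set (Fin N → ℝ))
    (hΞ : Ξ = {w : Fin N → ℝ | w ∈ Δ ∧ ∀ i, w i ≤ 1 / (n : ℝ)})
    (ξ : Fin N → ℝ) (hmem : ξ ∈ Ξ)
    (X1 X2 X3 : Set (Fin N))
    (hX1 : X1 = {i | ξ i = 0})
    (hX2 : X2 = {i | 0 < ξ i ∧ ξ i < 1 / (n : ℝ)})
    (hX3 : X3 = {i | ξ i = 1 / (n : ℝ)})
    (s : ℝ) (hs : ∀ i ∈ X2, F ξ (Pi.single i 1) = s)
    (ξ0 : Fin N → ℝ) (hξ0 : ξ0 ∈ Ξ)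
    (δ : ℝ) (hδ : 0 < δ)
    (hgap : Φ ξ - Φ ξ0 > δ)
    (hX1e : X1 = ∅) :
    X3.Nonempty ∧ sSup ((fun i => F ξ (Pi.single i 1)) '' X3) - s ≥ δ := by
  subst hΔ hΞ hX1 hX2 hX3
  obtain ⟨hξΔ, hξle⟩ := hmem
  obtain ⟨hξ0Δ, hξ0le⟩ := hξ0
  set f : Fin N → ℝ := fun i => F ξ (Pi.single i 1)
  have hξpos : ∀ i, 0 < ξ i := fun i =>
    (hξΔ.1 i).lt_of_ne' fun h => (Set.eq_empty_iff_forall_notMem.1 hX1e i) h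
  have hξf : ∑ i, ξ i * f i = 0 := by
    rw [← hlin ξ hξΔ ξ hξΔ]
    exact eq_zero_of_tendsto_slope_segment_self (hF ξ hξΔ ξ hξΔ)
  have hξ0f : ∑ i, ξ0 i * f i ≤ Φ ξ0 - Φ ξ := by
    rw [← hlin ξ hξΔ ξ0 hξ0Δ]
    exact hconv.le_sub_of_tendsto_slope_segment hξΔ hξ0Δ (hF ξ hξΔ ξ0 hξ0Δ)
  have hgap_sum : δ < ∑ i, (ξ i - ξ0 i) * f i := by
    simp only [sub_mul, Finset.sum_sub_distrib]
    linarith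
  have hsub_lt (M : ℝ) (hM : ∀ i ∈ {i | ξ i = 1 / (n : ℝ)}, f i ≤ M) : δ < M - s :=
    lt_sub_of_lt_sum_sub_mul hξΔ.1 hξ0Δ.1 hξΔ.2 hξ0Δ.2 (fun i (hi : ξ i = _) => hi ▸ hξ0le i)
      (fun i hi => hs i ⟨hξpos i, (hξle i).lt_of_ne hi⟩) hM hδ hgap_sum
  have hX3 : {i | ξ i = 1 / (n : ℝ)}.Nonempty := by
    by_contra hempty
    -- an empty `X₃` would be bounded by every `M`, in particular by `s`
    exact (hsub_lt s fun i hi => (hempty ⟨i, hi⟩).elim).not_ge ((sub_self s).trans_le hδ.le)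
  exact ⟨hX3, (hsub_lt _ fun i hi =>
    le_csSup (Set.toFinite _).bddAbove (Set.mem_image_of_mem f hi)).le⟩

theorem stmt_7
    (N : ℕ) (hN : 1 ≤ N)
    (Δ : Set (Fin N → ℝ))
    (hΔ : Δ = {w : Fin N → ℝ | (∀ i, 0 ≤ w i) ∧ ∑ i, w i = 1})
    (Φ : (Fin N → ℝ) → ℝ)
    (hconv : ConvexOn ℝ Δ Φ)
    (F : (Fin N → ℝ) → (Fin N → ℝ) → ℝ)
    (hF : ∀ ξ ∈ Δ, ∀ η ∈ Δ,
      Filter.Tendsto (fun α : ℝ => (Φ ((1 - α) • ξ + α • η) - Φ ξ) / α)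
        (nhdsWithin 0 (Set.Ioi 0)) (nhds (F ξ η)))
    (hlin : ∀ ξ ∈ Δ, ∀ η ∈ Δ, F ξ η = ∑ i, η i * F ξ (Pi.single i 1))
    (n : ℕ) (hn1 : 1 ≤ n) (hnN : n ≤ N)
    (Ξ : Set (Fin N → ℝ))
    (hΞ : Ξ = {w : Fin N → ℝ | w ∈ Δ ∧ ∀ i, w i ≤ 1 / (n : ℝ)})
    (ξ : Fin N → ℝ) (hmem : ξ ∈ Ξ)
    (X1 X2 X3 : Set (Fin N))
    (hX1 : X1 = {i | ξ i = 0})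
    (hX2 : X2 = {i | 0 < ξ i ∧ ξ i < 1 / (n : ℝ)})
    (hX3 : X3 = {i | ξ i = 1 / (n : ℝ)})
    (s : ℝ) (hs : ∀ i ∈ X2, F ξ (Pi.single i 1) = s)
    (ξ0 : Fin N → ℝ) (hξ0 : ξ0 ∈ Ξ)
    (δ : ℝ) (hδ : 0 < δ)
    (hgap : Φ ξ - Φ ξ0 > δ)
    (hX2ne : X2.Nonempty) (hX1e : X1 = ∅) :
    X3.Nonempty ∧ sSup ((fun i => F ξ (Pi.single i 1)) '' X3) - s ≥ δ :=
  stmt_7_general N Δ hΔ Φ hconv F hF hlin n Ξ hΞ ξ hmem X1 X2 X3 hX1 hX2 hX3 s hs ξ0 hξ0 δ hδ hgap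
    hX1e
end

section
/- Let ξ = (w_1,…,w_N) ∈ Ξ with X_1(ξ) = {i : w_i = 0}, X_3(ξ) = {i : w_i = 1/n}, X_2(ξ) = {i : 0 < w_i < 1/n}, suppose F_Φ(ξ; i) = s for every i ∈ X_2(ξ), and suppose there exist ξ_0 ∈ Ξ and δ > 0 with Φ(ξ) − Φ(ξ_0) > δ. If X_1(ξ), X_2(ξ), and X_3(ξ) are all nonempty, then at least one of the following holds: (i) min_{i ∈ X_1(ξ)} F_Φ(ξ; i) − s ≤ −δ/2; (ii) max_{i ∈ X_3(ξ)} F_Φ(ξ; i) − s ≥ δ/2. -/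
/-!
Suppose both alternatives fail, and write `f i = F_Φ(ξ; i)`. Convexity bounds the directional
derivative towards `ξ₀` by `Φ(ξ₀) - Φ(ξ) < -δ`, and linear differentiability together with
`F_Φ(ξ, ξ) = 0` turns it into `∑ (ξ₀ᵢ - ξᵢ) f i`. On the other hand `f - s` is at least `-δ/2`
wherever a bounded design can increase the weight of `ξ` and at most `δ/2` wherever it can decrease
it, so each term `(ξ₀ᵢ - ξᵢ) (f i - s)` is at least `-δ/2 (ξ₀ᵢ + ξᵢ)`, and the sum is at least `-δ`.
-/

open Filter Topology

theorem ConvexOn.le_sub_of_tendsto_secant {E : Type*} [AddCommGroup E] [Module ℝ E]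
    {S : Set E} {Φ : E → ℝ} (hΦ : ConvexOn ℝ S Φ) {x y : E} (hx : x ∈ S) (hy : y ∈ S) {d : ℝ}
    (hd : Tendsto (fun α : ℝ => (Φ ((1 - α) • x + α • y) - Φ x) / α) (𝓝[>] 0) (𝓝 d)) :
    d ≤ Φ y - Φ x := by
  refine le_of_tendsto hd ?_
  filter_upwards [Ioo_mem_nhdsGT (zero_lt_one' ℝ)] with α ⟨hα0, hα1⟩
  have hcomb := hΦ.2 hx hy (sub_nonneg.2 hα1.le) hα0.le (sub_add_cancel 1 α)
  rw [smul_eq_mul, smul_eq_mul] at hcomb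
  rw [div_le_iff₀ hα0]
  linarith

theorem eq_zero_of_tendsto_secant_self {E : Type*} [AddCommGroup E] [Module ℝ E] {Φ : E → ℝ}
    {x : E} {d : ℝ}
    (hd : Tendsto (fun α : ℝ => (Φ ((1 - α) • x + α • x) - Φ x) / α) (𝓝[>] 0) (𝓝 d)) :
    d = 0 := by
  have hzero : (fun α : ℝ => (Φ ((1 - α) • x + α • x) - Φ x) / α) = fun _ => 0 := by
    funext α
    rw [← add_smul, sub_add_cancel, one_smul, sub_self, zero_div]
  rw [hzero] at hd
  exact tendsto_nhds_unique hd tendsto_const_nhds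

theorem neg_mul_add_le_sub_mul_sub {v w c f s ε : ℝ} (hv : 0 ≤ v) (hw : 0 ≤ w) (hvc : v ≤ c)
    (hwc : w ≤ c) (hε : 0 ≤ ε) (h_zero : w = 0 → s - ε ≤ f) (h_top : w = c → f ≤ s + ε)
    (h_mid : 0 < w → w < c → f = s) :
    -(ε * (v + w)) ≤ (v - w) * (f - s) := by
  rcases hw.eq_or_lt with rfl | hw_pos
  · nlinarith [h_zero rfl]
  rcases hwc.eq_or_lt with rfl | hw_lt
  · nlinarith [h_top rfl]
  rw [h_mid hw_pos hw_lt]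
  nlinarith

theorem neg_two_mul_le_sum_mul_sub_sum_mul {ι : Type*} [Fintype ι] {v w f : ι → ℝ} {c s ε : ℝ}
    (hv : ∀ i, 0 ≤ v i) (hw : ∀ i, 0 ≤ w i) (hv_sum : ∑ i, v i = 1) (hw_sum : ∑ i, w i = 1)
    (hvc : ∀ i, v i ≤ c) (hwc : ∀ i, w i ≤ c) (hε : 0 ≤ ε)
    (h_zero : ∀ i, w i = 0 → s - ε ≤ f i) (h_top : ∀ i, w i = c → f i ≤ s + ε)
    (h_mid : ∀ i, 0 < w i → w i < c → f i = s) :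
    -(2 * ε) ≤ ∑ i, v i * f i - ∑ i, w i * f i := by
  have hterm i : -(ε * (v i + w i)) ≤ (v i - w i) * (f i - s) :=
    neg_mul_add_le_sub_mul_sub (hv i) (hw i) (hvc i) (hwc i) hε (h_zero i) (h_top i) (h_mid i)
  have hsum := Finset.sum_le_sum fun i (_ : i ∈ Finset.univ) => hterm i
  have hlhs : ∑ i, -(ε * (v i + w i)) = -(2 * ε) := by
    rw [Finset.sum_neg_distrib, ← Finset.mul_sum, Finset.sum_add_distrib, hv_sum, hw_sum]
    ring
  have hrhs : ∑ i, (v i - w i) * (f i - s) = ∑ i, v i * f i - ∑ i, w i * f i := by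
    simp only [mul_sub, sub_mul, Finset.sum_sub_distrib, ← Finset.sum_mul, hv_sum, hw_sum]
    ring
  rwa [hlhs, hrhs] at hsum

theorem stmt_9_general
    (N : ℕ)
    (Δ : Set (Fin N → ℝ))
    (hΔ : Δ = {w : Fin N → ℝ | (∀ i, 0 ≤ w i) ∧ ∑ i, w i = 1})
    (Φ : (Fin N → ℝ) → ℝ)
    (hconv : ConvexOn ℝ Δ Φ)
    (F : (Fin N → ℝ) → (Fin N → ℝ) → ℝ)
    (hF : ∀ ξ ∈ Δ, ∀ η ∈ Δ,
      Filter.Tendsto (fun α : ℝ => (Φ ((1 - α) • ξ + α • η) - Φ ξ) / α)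
        (nhdsWithin 0 (Set.Ioi 0)) (nhds (F ξ η)))
    (hlin : ∀ ξ ∈ Δ, ∀ η ∈ Δ, F ξ η = ∑ i, η i * F ξ (Pi.single i 1))
    (n : ℕ)
    (Ξ : Set (Fin N → ℝ))
    (hΞ : Ξ = {w : Fin N → ℝ | w ∈ Δ ∧ ∀ i, w i ≤ 1 / (n : ℝ)})
    (ξ : Fin N → ℝ) (hmem : ξ ∈ Ξ)
    (X1 X2 X3 : Set (Fin N))
    (hX1 : X1 = {i | ξ i = 0})
    (hX2 : X2 = {i | 0 < ξ i ∧ ξ i < 1 / (n : ℝ)})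
    (hX3 : X3 = {i | ξ i = 1 / (n : ℝ)})
    (s : ℝ) (hs : ∀ i ∈ X2, F ξ (Pi.single i 1) = s)
    (ξ0 : Fin N → ℝ) (hξ0 : ξ0 ∈ Ξ)
    (δ : ℝ) (hδ : 0 < δ)
    (hgap : Φ ξ - Φ ξ0 > δ) :
    sInf ((fun i => F ξ (Pi.single i 1)) '' X1) - s ≤ -δ / 2 ∨
      sSup ((fun i => F ξ (Pi.single i 1)) '' X3) - s ≥ δ / 2 := by
  subst hΞ hX1 hX2 hX3
  set f : Fin N → ℝ := fun i => F ξ (Pi.single i 1)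
  by_contra! ⟨h_low, h_high⟩
  obtain ⟨hξΔ, hξc⟩ := hmem
  obtain ⟨hξ0Δ, hξ0c⟩ := hξ0
  have hself : F ξ ξ = 0 := eq_zero_of_tendsto_secant_self (hF ξ hξΔ ξ hξΔ)
  have hdescent : F ξ ξ0 ≤ Φ ξ0 - Φ ξ :=
    hconv.le_sub_of_tendsto_secant hξΔ hξ0Δ (hF ξ hξΔ ξ0 hξ0Δ)
  rw [hlin ξ hξΔ ξ hξΔ] at hself
  rw [hlin ξ hξΔ ξ0 hξ0Δ] at hdescent
  have h_zero (i) (hi : ξ i = 0) : s - δ / 2 ≤ f i := by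
    have := csInf_le (Set.toFinite _).bddBelow
      (Set.mem_image_of_mem f (show i ∈ {j | ξ j = 0} from hi))
    linarith
  have h_top (i) (hi : ξ i = 1 / (n : ℝ)) : f i ≤ s + δ / 2 := by
    have := le_csSup (Set.toFinite _).bddAbove
      (Set.mem_image_of_mem f (show i ∈ {j | ξ j = 1 / (n : ℝ)} from hi))
    linarith
  subst hΔ
  have hbound := neg_two_mul_le_sum_mul_sub_sum_mul hξ0Δ.1 hξΔ.1 hξ0Δ.2 hξΔ.2 hξ0c hξc
    (half_pos hδ).le h_zero h_top fun i h0 hc => hs i ⟨h0, hc⟩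
  linarith

theorem stmt_9
    (N : ℕ) (hN : 1 ≤ N)
    (Δ : Set (Fin N → ℝ))
    (hΔ : Δ = {w : Fin N → ℝ | (∀ i, 0 ≤ w i) ∧ ∑ i, w i = 1})
    (Φ : (Fin N → ℝ) → ℝ)
    (hconv : ConvexOn ℝ Δ Φ)
    (F : (Fin N → ℝ) → (Fin N → ℝ) → ℝ)
    (hF : ∀ ξ ∈ Δ, ∀ η ∈ Δ,
      Filter.Tendsto (fun α : ℝ => (Φ ((1 - α) • ξ + α • η) - Φ ξ) / α)
        (nhdsWithin 0 (Set.Ioi 0)) (nhds (F ξ η)))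
    (hlin : ∀ ξ ∈ Δ, ∀ η ∈ Δ, F ξ η = ∑ i, η i * F ξ (Pi.single i 1))
    (n : ℕ) (hn1 : 1 ≤ n) (hnN : n ≤ N)
    (Ξ : Set (Fin N → ℝ))
    (hΞ : Ξ = {w : Fin N → ℝ | w ∈ Δ ∧ ∀ i, w i ≤ 1 / (n : ℝ)})
    (ξ : Fin N → ℝ) (hmem : ξ ∈ Ξ)
    (X1 X2 X3 : Set (Fin N))
    (hX1 : X1 = {i | ξ i = 0})
    (hX2 : X2 = {i | 0 < ξ i ∧ ξ i < 1 / (n : ℝ)})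
    (hX3 : X3 = {i | ξ i = 1 / (n : ℝ)})
    (s : ℝ) (hs : ∀ i ∈ X2, F ξ (Pi.single i 1) = s)
    (ξ0 : Fin N → ℝ) (hξ0 : ξ0 ∈ Ξ)
    (δ : ℝ) (hδ : 0 < δ)
    (hgap : Φ ξ - Φ ξ0 > δ)
    (hX1ne : X1.Nonempty) (hX2ne : X2.Nonempty) (hX3ne : X3.Nonempty) :
    sInf ((fun i => F ξ (Pi.single i 1)) '' X1) - s ≤ -δ / 2 ∨
      sSup ((fun i => F ξ (Pi.single i 1)) '' X3) - s ≥ δ / 2 :=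
  stmt_9_general N Δ hΔ Φ hconv F hF hlin n Ξ hΞ ξ hmem X1 X2 X3 hX1 hX2 hX3 s hs ξ0 hξ0 δ hδ hgap
end
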